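/- For every operator A ∈ L(X⊗Z) there exists a linear map Ψ_A: L(Z)→L(X), namely the unique map with Choi operator J(Ψ_A) = conj(A), such that for every linear map Φ: L(X)→L(Y) and every B ∈ L(Y⊗Z), ⟨B, (Φ⊗id_Z)(A)⟩ = ⟨(id_{L(Y)}⊗Ψ_A)(B), J(Φ)⟩. Moreover, if A is positive semidefinite then Ψ_A is completely positive. -/

import Mathlib

open Matrix
open scoped Kronecker ComplexOrder

noncomputable section

/-- `Φ ⊗ id` : apply a linear map `Φ` on `L(X)` to the first tensor factor of `L(X ⊗ Z)`. -/
def lmapTensorId {n m k : Type*} [Fintype n] [Fintype k]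
    (Φ : Matrix n n ℂ →ₗ[ℂ] Matrix m m ℂ)
    (M : Matrix (n × k) (n × k) ℂ) : Matrix (m × k) (m × k) ℂ :=
  fun p q => Φ (fun i j => M (i, p.2) (j, q.2)) p.1 q.1

/-- `id ⊗ Ψ` : apply a linear map `Ψ` on `L(Z)` to the second tensor factor of `L(Y ⊗ Z)`. -/
def idTensorLmap {n k l : Type*} [Fintype n] [Fintype k]
    (Ψ : Matrix k k ℂ →ₗ[ℂ] Matrix l l ℂ)
    (M : Matrix (n × k) (n × k) ℂ) : Matrix (n × l) (n × l) ℂ :=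
  fun p q => Ψ (fun a b => M (p.1, a) (q.1, b)) p.2 q.2

/-- Complete positivity: `Φ ⊗ id_k` maps positive semidefinite operators to positive
semidefinite operators for every finite-dimensional ancilla `k`. -/
def IsCompletelyPositive {n m : Type*} [Fintype n] [Fintype m]
    (Φ : Matrix n n ℂ →ₗ[ℂ] Matrix m m ℂ) : Prop :=
  ∀ (k : Type) [Fintype k] [DecidableEq k],
    ∀ M : Matrix (n × k) (n × k) ℂ, M.PosSemidef → (lmapTensorId Φ M).PosSemidef

def IsTracePreserving {n m : Type*} [Fintype n] [Fintype m]
    (Φ : Matrix n n ℂ →ₗ[ℂ] Matrix m m ℂ) : Prop :=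
  ∀ M : Matrix n n ℂ, (Φ M).trace = M.trace

/-- Partial trace over the first tensor factor. -/
def trFst {n k : Type*} [Fintype n] (M : Matrix (n × k) (n × k) ℂ) : Matrix k k ℂ :=
  fun a b => ∑ i : n, M (i, a) (i, b)

/-- Partial trace over the second tensor factor. -/
def trSnd {n k : Type*} [Fintype k] (M : Matrix (n × k) (n × k) ℂ) : Matrix n n ℂ :=
  fun i j => ∑ a : k, M (i, a) (j, a)

/-- Hilbert-Schmidt inner product `⟨A, B⟩ = Tr(A* B)`. -/
def minner {n : Type*} [Fintype n] (A B : Matrix n n ℂ) : ℂ := (Aᴴ * B).trace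

/-- The Dec-2024 `Matrix.PosSemidef.sqrt`, spelled out (that definition is gone). -/
def posSemidefSqrtOld {n : Type*} [Fintype n] [DecidableEq n] {M : Matrix n n ℂ}
    (hM : M.PosSemidef) : Matrix n n ℂ :=
  hM.1.eigenvectorUnitary.1 * diagonal ((↑) ∘ (√·) ∘ hM.1.eigenvalues) *
    (star hM.1.eigenvectorUnitary : Matrix n n ℂ)

open Classical in
/-- Square root of a positive semidefinite matrix (junk value `0` otherwise). -/
def msqrt {n : Type*} [Fintype n] [DecidableEq n] (M : Matrix n n ℂ) : Matrix n n ℂ :=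
  if h : M.PosSemidef then posSemidefSqrtOld h else 0

/-- Trace norm `‖M‖₁ = Tr √(M* M)`. -/
def traceNorm {n : Type*} [Fintype n] [DecidableEq n] (M : Matrix n n ℂ) : ℝ :=
  ((posSemidefSqrtOld (Matrix.posSemidef_conjTranspose_mul_self M)).trace).re

/-- Fidelity `F(Q, R) = ‖√Q √R‖₁` of positive semidefinite matrices. -/
def fid {n : Type*} [Fintype n] [DecidableEq n] (Q R : Matrix n n ℂ) : ℝ :=
  traceNorm (msqrt Q * msqrt R)

/-- Choi-Jamiolkowski operator `J(Φ) = Σ_{i,j} Φ(|i⟩⟨j|) ⊗ |i⟩⟨j|`. -/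
def choi {n m : Type*} [Fintype n] [DecidableEq n] [Fintype m]
    (Φ : Matrix n n ℂ →ₗ[ℂ] Matrix m m ℂ) : Matrix (m × n) (m × n) ℂ :=
  fun p q => Φ (Matrix.single p.2 q.2 1) p.1 q.1

/-- Tensor product of vectors. -/
def tensorVec {α β : Type*} (v : α → ℂ) (w : β → ℂ) : α × β → ℂ := fun p => v p.1 * w p.2

/-- `u = (|00⟩ + |11⟩)/√2`. -/
def uVec : Fin 2 × Fin 2 → ℂ := fun p =>
  if p = (0, 0) then (Real.sqrt 2 : ℂ)⁻¹ else if p = (1, 1) then (Real.sqrt 2 : ℂ)⁻¹ else 0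

/-- `v = cos(π/8)|00⟩ + sin(π/8)|11⟩`. -/
def vVec : Fin 2 × Fin 2 → ℂ := fun p =>
  if p = (0, 0) then (Real.cos (Real.pi / 8) : ℂ)
  else if p = (1, 1) then (Real.sin (Real.pi / 8) : ℂ) else 0

/-- `w = -sin(π/8)|00⟩ + cos(π/8)|11⟩`. -/
def wVec : Fin 2 × Fin 2 → ℂ := fun p =>
  if p = (0, 0) then -(Real.sin (Real.pi / 8) : ℂ)
  else if p = (1, 1) then (Real.cos (Real.pi / 8) : ℂ) else 0

/-!
Every linear map is recovered from its Choi matrix by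
`Φ(M)_{ij} = Σ_{a,b} M_{ab} J(Φ)_{(i,a),(j,b)}`, and `Ψ_A` is this formula applied to `conj A`.
With it, both sides of the duality are the same six-fold sum of `conj B · A · J(Φ)`, taken in
different orders. If `A ≥ 0`, then `conj A = Σ_r v_r v_r*`, which puts `Ψ_A` in the Kraus form
`M ↦ Σ_r K_r M K_r*` with `(K_r)_{i a} = (v_r)_{(i,a)}`; hence
`(Ψ_A ⊗ id)(M) = Σ_r (K_r ⊗ 1) M (K_r ⊗ 1)*` is positive semidefinite whenever `M` is.
-/

section ChoiDuality

variable {n m k : Type*} [Fintype n]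

def ofChoi (C : Matrix (m × n) (m × n) ℂ) : Matrix n n ℂ →ₗ[ℂ] Matrix m m ℂ where
  toFun M := of fun i j => ∑ a, ∑ b, M a b * C (i, a) (j, b)
  map_add' M N := by
    ext i j
    simp [add_mul, Finset.sum_add_distrib]
  map_smul' c M := by
    ext i j
    simp [Finset.mul_sum, mul_assoc]

lemma ofChoi_apply (C : Matrix (m × n) (m × n) ℂ) (M : Matrix n n ℂ) (i j : m) :
    ofChoi C M i j = ∑ a, ∑ b, M a b * C (i, a) (j, b) := rfl

lemma choi_ofChoi [DecidableEq n] [Fintype m] (C : Matrix (m × n) (m × n) ℂ) :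
    choi (ofChoi C) = C := by
  ext ⟨i, a⟩ ⟨j, b⟩
  simp [choi, ofChoi_apply, single_apply, ite_and]

lemma ofChoi_choi [DecidableEq n] [Fintype m] (Φ : Matrix n n ℂ →ₗ[ℂ] Matrix m m ℂ) :
    ofChoi (choi Φ) = Φ := by
  refine LinearMap.ext fun M => ?_
  have single_eq (a b : n) : single a b (M a b) = M a b • single a b 1 := by
    rw [smul_single, smul_eq_mul, mul_one]
  ext i j
  conv_rhs => rw [matrix_eq_sum_single M]
  simp only [ofChoi_apply, choi, map_sum, Matrix.sum_apply, single_eq, map_smul,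
    Matrix.smul_apply, smul_eq_mul]

variable [Fintype k]

lemma idTensorLmap_ofChoi_apply (C : Matrix (m × n) (m × n) ℂ) (M : Matrix (k × n) (k × n) ℂ)
    (p q : k × m) :
    idTensorLmap (ofChoi C) M p q = ∑ a, ∑ b, M (p.1, a) (q.1, b) * C (p.2, a) (q.2, b) := rfl

variable [Fintype m]

lemma lmapTensorId_apply [DecidableEq n] (Φ : Matrix n n ℂ →ₗ[ℂ] Matrix m m ℂ)
    (M : Matrix (n × k) (n × k) ℂ) (p q : m × k) :
    lmapTensorId Φ M p q = ∑ a, ∑ b, M (a, p.2) (b, q.2) * choi Φ (p.1, a) (q.1, b) := by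
  conv_lhs => rw [← ofChoi_choi Φ]
  rfl

lemma minner_lmapTensorId [DecidableEq n] (A : Matrix (n × k) (n × k) ℂ)
    (Φ : Matrix n n ℂ →ₗ[ℂ] Matrix m m ℂ) (B : Matrix (m × k) (m × k) ℂ) :
    minner B (lmapTensorId Φ A) = minner (idTensorLmap (ofChoi (A.map star)) B) (choi Φ) := by
  simp only [minner, trace, diag_apply, mul_apply, conjTranspose_apply, lmapTensorId_apply,
    idTensorLmap_ofChoi_apply, Fintype.sum_prod_type, map_apply, star_sum, star_mul', star_star,
    Finset.mul_sum, Finset.sum_mul, mul_assoc]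
  refine Finset.sum_congr rfl fun j _ => ?_
  rw [Finset.sum_comm]
  conv_rhs => rw [Finset.sum_comm]
  refine Finset.sum_congr rfl fun i _ => ?_
  simp_rw [Finset.sum_comm (γ := k) (α := n)]
  rw [Finset.sum_comm]
  exact Finset.sum_congr rfl fun _ _ => Finset.sum_congr rfl fun _ _ => Finset.sum_comm

end ChoiDuality

section CompletePositivity

variable {n m : Type*}

lemma Matrix.PosSemidef.map_star {A : Matrix n n ℂ} (hA : A.PosSemidef) :
    (A.map star).PosSemidef := by
  have h : A.map star = Aᴴᵀ := by
    ext
    simp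
  rw [h, hA.isHermitian.eq]
  exact hA.transpose

variable [Fintype n]

lemma ofChoi_sum_vecMulVec_apply {ι : Type*} [Fintype ι] (v : ι → m × n → ℂ)
    (M : Matrix n n ℂ) :
    ofChoi (∑ i, vecMulVec (v i) (star (v i))) M =
      ∑ i, of (Function.curry (v i)) * M * (of (Function.curry (v i)))ᴴ := by
  ext x y
  simp only [ofChoi_apply, Matrix.sum_apply, vecMulVec_apply, mul_apply, conjTranspose_apply,
    of_apply, Function.curry_apply, Pi.star_apply, Finset.mul_sum, Finset.sum_mul]
  rw [Finset.sum_comm_cycle]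
  refine Finset.sum_congr rfl fun i _ => Finset.sum_comm.trans ?_
  exact Finset.sum_congr rfl fun _ _ => Finset.sum_congr rfl fun _ _ => by ring

variable [Fintype m]

lemma isCompletelyPositive_of_eq_sum_conj {ι : Type*} [Fintype ι]
    {Φ : Matrix n n ℂ →ₗ[ℂ] Matrix m m ℂ} (K : ι → Matrix m n ℂ)
    (hΦ : ∀ M, Φ M = ∑ i, K i * M * (K i)ᴴ) : IsCompletelyPositive Φ := by
  intro l _ _ M hM
  let L (i : ι) : Matrix (m × l) (n × l) ℂ := K i ⊗ₖ 1
  have h : lmapTensorId Φ M = ∑ i, L i * M * (L i)ᴴ := by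
    ext ⟨x, c⟩ ⟨y, d⟩
    change Φ (of fun i j => M (i, c) (j, d)) x y = _
    simp [L, hΦ, Matrix.sum_apply, Matrix.mul_apply, one_apply, Fintype.sum_prod_type,
      apply_ite (starRingEnd ℂ)]
  rw [h]
  exact posSemidef_sum _ fun i _ => hM.mul_mul_conjTranspose_same _

lemma isCompletelyPositive_ofChoi {C : Matrix (m × n) (m × n) ℂ} (hC : C.PosSemidef) :
    IsCompletelyPositive (ofChoi C) := by
  obtain ⟨r, v, rfl⟩ := posSemidef_iff_eq_sum_vecMulVec.mp hC
  exact isCompletelyPositive_of_eq_sum_conj _ (ofChoi_sum_vecMulVec_apply v)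

end CompletePositivity

/-- For every `A ∈ L(X ⊗ Z)` there is a map `Ψ_A : L(Z) → L(X)` with Choi operator
`conj(A)` satisfying `⟨B, (Φ ⊗ id)(A)⟩ = ⟨(id ⊗ Ψ_A)(B), J(Φ)⟩` for all `Φ` and `B`;
moreover `Ψ_A` is completely positive whenever `A` is positive semidefinite. -/
theorem stmt11 {n k : Type*} [Fintype n] [DecidableEq n] [Fintype k] [DecidableEq k]
    (A : Matrix (n × k) (n × k) ℂ) :
    ∃ Ψ : Matrix k k ℂ →ₗ[ℂ] Matrix n n ℂ,
      choi Ψ = A.map star ∧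
      (∀ (m : Type) [Fintype m] [DecidableEq m],
        ∀ (Φ : Matrix n n ℂ →ₗ[ℂ] Matrix m m ℂ) (B : Matrix (m × k) (m × k) ℂ),
          minner B (lmapTensorId Φ A) = minner (idTensorLmap Ψ B) (choi Φ)) ∧
      (A.PosSemidef → IsCompletelyPositive Ψ) :=
  ⟨ofChoi (A.map star), choi_ofChoi _, fun _ _ _ Φ B => minner_lmapTensorId A Φ B,
    fun hA => isCompletelyPositive_ofChoi hA.map_star⟩

end
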